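/- Let d₁ ≥ 1, let t₁ < t₂ < ⋯ < t_{d₁} be real knots, and let d₂ ∈ ℕ. Then the set of functions g : ℝ → ℝ that lie both in the shifted-ReLU span on knots t₁ < ⋯ < t_{d₁} and in the set of polynomial functions of degree at most d₂ is exactly the set of constant functions. That is, g belongs to both classes if and only if there exists a ∈ ℝ with g(x) = a for all x. -/
import Mathlib


/-- Lemma 1 (activation-space content): the intersection of the shifted-ReLU span
on strictly increasing knots `t 0 < t 1 < ⋯ < t (d₁-1)` with the set of polynomial
functions of degree at most `d₂` is exactly the set of constant functions. -/
theorem relu_span_inter_polynomials_eq_constants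
    (d₁ : ℕ) (hd₁ : 1 ≤ d₁) (t : Fin d₁ → ℝ) (ht : StrictMono t)
    (d₂ : ℕ) (g : ℝ → ℝ) :
    ((∃ (c₀ : ℝ) (c : Fin d₁ → ℝ),
        ∀ x : ℝ, g x = c₀ + ∑ j : Fin d₁, c j * max (x - t j) 0) ∧
      (∃ p : Polynomial ℝ, p.degree ≤ (d₂ : ℕ) ∧ ∀ x : ℝ, g x = p.eval x)) ↔
      ∃ a : ℝ, ∀ x : ℝ, g x = a := by
  constructor
  · rintro ⟨⟨c₀, c, hc⟩, ⟨p, _, hp⟩⟩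
    refine ⟨c₀, fun x => ?_⟩
    have h0 : (0 : ℕ) < d₁ := hd₁
    set j0 : Fin d₁ := ⟨0, h0⟩
    -- g equals c₀ on (-∞, t j0)
    have hlow : ∀ y : ℝ, y < t j0 → g y = c₀ := by
      intro y hy
      rw [hc y]
      have : ∀ j : Fin d₁, c j * max (y - t j) 0 = 0 := by
        intro j
        have : y - t j ≤ 0 := by
          have : t j0 ≤ t j := ht.monotone (by simp [j0, Fin.le_def])
          linarith
        rw [max_eq_right this, mul_zero]
      rw [Finset.sum_congr rfl (fun j _ => this j), Finset.sum_const, smul_zero,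
        add_zero]
    -- p - C c₀ has infinitely many roots
    have hq : p - Polynomial.C c₀ = 0 := by
      apply Polynomial.eq_zero_of_infinite_isRoot
      apply Set.Infinite.mono (s := Set.Iio (t j0))
      · intro y hy
        simp only [Set.mem_setOf_eq, Polynomial.IsRoot, Polynomial.eval_sub,
          Polynomial.eval_C, sub_eq_zero]
        rw [← hp y, hlow y hy]
      · exact Set.Iio_infinite _
    have : p = Polynomial.C c₀ := by linear_combination hq
    rw [hp x, this, Polynomial.eval_C]
  · rintro ⟨a, ha⟩
    refine ⟨⟨a, fun _ => 0, fun x => by simp [ha x]⟩,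
      ⟨Polynomial.C a, ?_, fun x => by simp [ha x]⟩⟩
    exact le_trans (Polynomial.degree_C_le) (by exact_mod_cast Nat.cast_nonneg' d₂)
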